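/- arXiv:2509.03040 — 4 statements merged into one kernel-verified Lean document; each statement's English description precedes it below -/
import Mathlib

section
/- Let X ∈ M_{qs,ns} be a block matrix with s×s blocks, R = Y ⊗ I ∈ M_{ns} with Y ∈ M_n and I the s×s identity, and Z ∈ M_{ns,rs} a block matrix with s×s blocks. Then (X·R) ⋆ Z = X ⋆ (R·Z), where ⋆ is the blockwise Kronecker multiplication defined by (X ⋆ Z)_{iν} = Σ_j X_{ij} ⊗ Z_{jν}. -/
/-!
The `(i, j)` block of `X·(Y ⊗ I)` is `∑ₖ y_{kj} X_{ik}` and the `(k, ν)` block of `(Y ⊗ I)·Z` is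
`∑ⱼ y_{kj} Z_{jν}`. Since the Kronecker product is bilinear, the scalars `y_{kj}` pass from one
factor to the other, and both sides equal `∑_{j,k} y_{kj} X_{ik} ⊗ Z_{jν}`.
-/

open Matrix Kronecker

/-- The block of a block matrix with `s×s` blocks. -/
def blk {K : Type*} [Field K] {q r s : ℕ}
    (M : Matrix (Fin q × Fin s) (Fin r × Fin s) K) (i : Fin q) (j : Fin r) :
    Matrix (Fin s) (Fin s) K := fun a b => M (i, a) (j, b)

/-- The block multiplication `X ⋆ Z`, with `(X ⋆ Z)_{iν} = Σ_j X_{ij} ⊗ Z_{jν}`. -/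
def bstar {K : Type*} [Field K] {q n r s : ℕ}
    (X : Matrix (Fin q × Fin s) (Fin n × Fin s) K)
    (Z : Matrix (Fin n × Fin s) (Fin r × Fin s) K) :
    Matrix (Fin q × (Fin s × Fin s)) (Fin r × (Fin s × Fin s)) K :=
  fun p c => (∑ j, blk X p.1 j ⊗ₖ blk Z j c.1) p.2 c.2

theorem Matrix.sum_kronecker_sum_smul {R α ι κ l m n p : Type*} [CommSemiring R] [Semiring α]
    [Algebra R α] [Fintype ι] [Fintype κ] (c : ι → κ → R) (A : ι → Matrix l m α)
    (B : κ → Matrix n p α) :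
    ∑ j, (∑ k, c k j • A k) ⊗ₖ B j = ∑ k, A k ⊗ₖ ∑ j, c k j • B j := by
  ext ⟨a, b⟩ ⟨a', b'⟩
  simp only [kronecker_apply, Matrix.sum_apply, Matrix.smul_apply, Finset.sum_mul, Finset.mul_sum,
    smul_mul_assoc, mul_smul_comm]
  exact Finset.sum_comm

section Blocks

variable {K : Type*} [Field K] {q n r s : ℕ}

theorem blk_mul_kronecker_one (X : Matrix (Fin q × Fin s) (Fin n × Fin s) K)
    (Y : Matrix (Fin n) (Fin n) K) (i : Fin q) (j : Fin n) :
    blk (X * (Y ⊗ₖ (1 : Matrix (Fin s) (Fin s) K))) i j = ∑ k, Y k j • blk X i k := by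
  ext a b
  simp [blk, mul_apply, Fintype.sum_prod_type, one_apply, Matrix.sum_apply, mul_comm]

theorem blk_kronecker_one_mul (Y : Matrix (Fin n) (Fin n) K)
    (Z : Matrix (Fin n × Fin s) (Fin r × Fin s) K) (j : Fin n) (ν : Fin r) :
    blk ((Y ⊗ₖ (1 : Matrix (Fin s) (Fin s) K)) * Z) j ν = ∑ k, Y j k • blk Z k ν := by
  ext a b
  simp [blk, mul_apply, Fintype.sum_prod_type, one_apply, Matrix.sum_apply]

end Blocks

/-- If `R = Y ⊗ I` has scalar blocks, then `(X·R) ⋆ Z = X ⋆ (R·Z)`. -/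
theorem stmt5 {K : Type*} [Field K] {q n r s : ℕ}
    (X : Matrix (Fin q × Fin s) (Fin n × Fin s) K) (Y : Matrix (Fin n) (Fin n) K)
    (Z : Matrix (Fin n × Fin s) (Fin r × Fin s) K) :
    bstar (X * (Y ⊗ₖ (1 : Matrix (Fin s) (Fin s) K))) Z =
      bstar X ((Y ⊗ₖ (1 : Matrix (Fin s) (Fin s) K)) * Z) := by
  funext p c
  simp only [bstar, blk_mul_kronecker_one, blk_kronecker_one_mul,
    sum_kronecker_sum_smul (R := K) Y]
end

section
/- Every unreduced lower block Hessenberg matrix Z ∈ M_{ns}(𝕂) (i.e., Z_{ij} = 0 for j > i+1 and each superdiagonal block Z_{i,i+1} is invertible) is similar, via an invertible lower block triangular matrix S, to a lower block Frobenius (block companion) matrix: S Z S⁻¹ has identity blocks on the block superdiagonal, zero blocks elsewhere in the first n−1 block rows, and arbitrary blocks in the last block row. -/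
/-!
Take `S` to be the block Krylov matrix whose `i`-th block row is `E₀ Zⁱ`, where
`E₀ = [I 0 ⋯ 0]`. Then the `i`-th block row of `S Z` is the `(i+1)`-th block row of `S`, so for
`i < n - 1` the `i`-th block row of `S Z S⁻¹` is the `(i+1)`-th block row of the identity.
Because `Z` is lower block Hessenberg, `S` is lower block triangular, and its diagonal blocks are
the products `Z₀₁ Z₁₂ ⋯ Z_{i-1,i}` of the invertible superdiagonal blocks, so `S` is invertible.
-/

open Matrix

theorem Matrix.det_of_blockLowerTriangular {R ι m : Type*} [CommRing R] [LinearOrder ι]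
    [Fintype ι] [DecidableEq ι] [Fintype m] [DecidableEq m] (M : Matrix (ι × m) (ι × m) R)
    (hM : ∀ i j, i < j → ∀ a b, M (i, a) (j, b) = 0) :
    M.det = ∏ k, (M.submatrix (Prod.mk k) (Prod.mk k)).det := by
  rw [← det_transpose]
  have hMt : Mᵀ.BlockTriangular Prod.fst := fun p q hqp => hM q.1 p.1 hqp q.2 p.2
  rw [hMt.det_fintype]
  refine Finset.prod_congr rfl fun k _ => ?_
  let e : m ≃ {p : ι × m // p.1 = k} :=
    { toFun a := ⟨(k, a), rfl⟩
      invFun p := p.1.2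
      left_inv _ := rfl
      right_inv := by rintro ⟨⟨_, a⟩, rfl⟩; rfl }
  rw [← det_submatrix_equiv_self e, ← det_transpose]
  rfl

section BlockKrylov

variable {K : Type*} [Field K] {n s : ℕ}

theorem blk_one (i j : Fin n) :
    blk (1 : Matrix (Fin n × Fin s) (Fin n × Fin s) K) i j = if i = j then 1 else 0 := by
  ext a b
  by_cases hij : i = j <;> simp [blk, one_apply, hij]

def firstBlockRow : Matrix (Fin s) (Fin n × Fin s) K :=
  of fun a q => if (q.1 : ℕ) = 0 ∧ q.2 = a then 1 else 0

variable (Z : Matrix (Fin n × Fin s) (Fin n × Fin s) K)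

def IsLowerBlockHessenberg : Prop :=
  ∀ i j : Fin n, (i : ℕ) + 1 < (j : ℕ) → blk Z i j = 0

def krylovBlockRow (i : ℕ) : Matrix (Fin s) (Fin n × Fin s) K :=
  (firstBlockRow : Matrix (Fin s) (Fin n × Fin s) K) * Z ^ i

theorem krylovBlockRow_succ (i : ℕ) : krylovBlockRow Z (i + 1) = krylovBlockRow Z i * Z := by
  simp only [krylovBlockRow, pow_succ, Matrix.mul_assoc]

theorem krylovBlockRow_zero : krylovBlockRow Z 0 = firstBlockRow := by
  rw [krylovBlockRow, pow_zero, Matrix.mul_one]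

def blockKrylov : Matrix (Fin n × Fin s) (Fin n × Fin s) K :=
  of fun p => krylovBlockRow Z p.1 p.2

theorem krylovBlockRow_apply_eq_zero (hZ : IsLowerBlockHessenberg Z) (i : ℕ) (j : Fin n)
    (hij : i < j) (a b : Fin s) : (krylovBlockRow Z i) a (j, b) = 0 := by
  induction i generalizing j b with
  | zero => simp [krylovBlockRow_zero, firstBlockRow, Nat.ne_zero_of_lt hij]
  | succ i ih =>
    rw [krylovBlockRow_succ, mul_apply]
    refine Finset.sum_eq_zero fun ⟨k, c⟩ _ => ?_
    rcases lt_or_ge i k with hk | hk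
    · rw [ih k hk, zero_mul]
    · rw [show Z (k, c) (j, b) = 0 from congrFun (congrFun (hZ k j (by omega)) c) b,
        mul_zero]

theorem blk_blockKrylov_eq_zero (hZ : IsLowerBlockHessenberg Z) (i j : Fin n)
    (hij : (i : ℕ) < j) : blk (blockKrylov Z) i j = 0 := by
  ext a b
  exact krylovBlockRow_apply_eq_zero Z hZ i j hij a b

theorem blk_blockKrylov_succ_diag (hZ : IsLowerBlockHessenberg Z) (i : Fin n)
    (h : (i : ℕ) + 1 < n) :
    blk (blockKrylov Z) ⟨i + 1, h⟩ ⟨i + 1, h⟩ =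
      blk (blockKrylov Z) i i * blk Z i ⟨i + 1, h⟩ := by
  ext a b
  simp only [blk, blockKrylov, of_apply]
  rw [krylovBlockRow_succ, mul_apply, Fintype.sum_prod_type, Finset.sum_eq_single i]
  · rfl
  · intro k _ hk
    refine Finset.sum_eq_zero fun c _ => ?_
    rcases lt_or_gt_of_ne (Fin.val_ne_of_ne hk) with hki | hik
    · rw [show Z (k, c) (⟨i + 1, h⟩, b) = 0 from
        congrFun (congrFun (hZ k _ (by simp; omega)) c) b, mul_zero]
    · rw [krylovBlockRow_apply_eq_zero Z hZ i k hik, zero_mul]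
  · simp

theorem isUnit_det_blk_blockKrylov_diag
    (hZ : IsLowerBlockHessenberg Z)
    (hsup : ∀ (i : ℕ) (h : i + 1 < n),
      IsUnit (blk Z ⟨i, Nat.lt_of_succ_lt h⟩ ⟨i + 1, h⟩).det) :
    ∀ (i : ℕ) (h : i < n), IsUnit (blk (blockKrylov Z) ⟨i, h⟩ ⟨i, h⟩).det
  | 0, h => by
    have : blk (blockKrylov Z) ⟨0, h⟩ ⟨0, h⟩ = 1 := by
      ext a b
      simp [blk, blockKrylov, krylovBlockRow_zero, firstBlockRow, one_apply, eq_comm]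
    simp [this]
  | i + 1, h => by
    rw [blk_blockKrylov_succ_diag Z hZ ⟨i, Nat.lt_of_succ_lt h⟩ h, det_mul]
    exact (isUnit_det_blk_blockKrylov_diag hZ hsup i (by omega)).mul (hsup i h)

theorem isUnit_det_blockKrylov
    (hZ : IsLowerBlockHessenberg Z)
    (hsup : ∀ (i : ℕ) (h : i + 1 < n),
      IsUnit (blk Z ⟨i, Nat.lt_of_succ_lt h⟩ ⟨i + 1, h⟩).det) :
    IsUnit (blockKrylov Z).det := by
  rw [det_of_blockLowerTriangular _ fun (i j : Fin n) hij a b =>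
    krylovBlockRow_apply_eq_zero Z hZ i j hij a b, IsUnit.prod_univ_iff]
  exact fun k => isUnit_det_blk_blockKrylov_diag Z hZ hsup k k.isLt

theorem blockKrylov_mul_apply (i : Fin n) (h : (i : ℕ) + 1 < n) (a : Fin s) :
    (blockKrylov Z * Z) (i, a) = blockKrylov Z (⟨i + 1, h⟩, a) := by
  rw [mul_apply_eq_vecMul]
  change krylovBlockRow Z i a ᵥ* Z = krylovBlockRow Z (i + 1) a
  rw [krylovBlockRow_succ, mul_apply_eq_vecMul]

end BlockKrylov

/-- Every unreduced lower block Hessenberg matrix is similar, via an invertible lower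
block triangular matrix `S`, to a lower block Frobenius (block companion) matrix. -/
theorem stmt10 {K : Type*} [Field K] {n s : ℕ}
    (Z : Matrix (Fin n × Fin s) (Fin n × Fin s) K)
    (hhess : ∀ i j : Fin n, (i : ℕ) + 1 < (j : ℕ) → blk Z i j = 0)
    (hsup : ∀ (i : ℕ) (h : i + 1 < n), IsUnit (blk Z ⟨i, by omega⟩ ⟨i + 1, h⟩).det) :
    ∃ S : Matrix (Fin n × Fin s) (Fin n × Fin s) K,
      IsUnit S.det ∧
      (∀ i j : Fin n, (i : ℕ) < (j : ℕ) → blk S i j = 0) ∧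
      (∀ i j : Fin n, (i : ℕ) + 1 < n →
        blk (S * Z * S⁻¹) i j =
          if (j : ℕ) = (i : ℕ) + 1 then (1 : Matrix (Fin s) (Fin s) K) else 0) := by
  have hS := isUnit_det_blockKrylov Z hhess hsup
  refine ⟨blockKrylov Z, hS, blk_blockKrylov_eq_zero Z hhess, fun i j h => ?_⟩
  have hrow : ∀ a, (blockKrylov Z * Z * (blockKrylov Z)⁻¹) (i, a) =
      (1 : Matrix (Fin n × Fin s) (Fin n × Fin s) K) (⟨i + 1, h⟩, a) := by
    intro a
    rw [mul_apply_eq_vecMul, blockKrylov_mul_apply Z i h, ← mul_apply_eq_vecMul,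
      mul_nonsing_inv _ hS]
  have hblk : blk (blockKrylov Z * Z * (blockKrylov Z)⁻¹) i j = blk 1 ⟨i + 1, h⟩ j := by
    ext a b
    exact congrFun (hrow a) (j, b)
  rw [hblk, blk_one]
  simp [Fin.ext_iff, eq_comm]
end

section
/- Let F ∈ M_{ns} be the lower block Frobenius matrix with last block row [−A_n,…,−A_1], let P ∈ M_{ns} be the lower block triangular Toeplitz matrix with blocks A_{i−j} below the diagonal (A_0 = I), and let D ∈ M_{ns} be any block matrix whose first p−1 block rows and last n−p block columns are zero. Then there exists an invertible lower block triangular matrix S such that S(F + D)S⁻¹ = Φ is the lower block Frobenius matrix with coefficients Γ_i = A_i − SP_s(𝒥^{i−1} P D) for i = 1,…,n, where 𝒥 = J ⊗ I and J is the n×n shift matrix. -/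
open Matrix Kronecker

/-- The block trace `SP_s`. -/
def SP {K : Type*} [Field K] {n s : ℕ}
    (M : Matrix (Fin n × Fin s) (Fin n × Fin s) K) : Matrix (Fin s) (Fin s) K :=
  ∑ i, blk M i i

/-- The `n×n` shift matrix `J` (ones on the superdiagonal). -/
def shiftJ (K : Type*) [Field K] (n : ℕ) : Matrix (Fin n) (Fin n) K :=
  fun i j => if (j : ℕ) = (i : ℕ) + 1 then 1 else 0

/-- The lower block Frobenius (block companion) matrix of the matrix polynomial
`λⁿ I + A 1 λ^{n-1} + … + A n`: identity blocks on the block superdiagonal, zeros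
elsewhere in the first `n-1` block rows, last block row `[-A n, …, -A 1]`. -/
def frob {K : Type*} [Field K] (n s : ℕ) (A : ℕ → Matrix (Fin s) (Fin s) K) :
    Matrix (Fin n × Fin s) (Fin n × Fin s) K :=
  fun p c =>
    if (p.1 : ℕ) + 1 < n then
      (if (c.1 : ℕ) = (p.1 : ℕ) + 1 then (1 : Matrix (Fin s) (Fin s) K) else 0) p.2 c.2
    else (-(A (n - (c.1 : ℕ)))) p.2 c.2

/-- The lower block triangular block Toeplitz matrix `P` with blocks `A (i - j)`
on and below the block diagonal (`A 0 = I`). -/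
def toep {K : Type*} [Field K] (n s : ℕ) (A : ℕ → Matrix (Fin s) (Fin s) K) :
    Matrix (Fin n × Fin s) (Fin n × Fin s) K :=
  fun p c => if (c.1 : ℕ) ≤ (p.1 : ℕ) then (A ((p.1 : ℕ) - (c.1 : ℕ))) p.2 c.2 else 0

/-- `N 0 = I`, `N (ν+1) = N ν · F + Iₙ ⊗ A (ν+1)`. -/
def Nmat {K : Type*} [Field K] {n s : ℕ}
    (F : Matrix (Fin n × Fin s) (Fin n × Fin s) K)
    (A : ℕ → Matrix (Fin s) (Fin s) K) : ℕ → Matrix (Fin n × Fin s) (Fin n × Fin s) K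
  | 0 => 1
  | ν + 1 => Nmat F A ν * F + (1 : Matrix (Fin n) (Fin n) K) ⊗ₖ A (ν + 1)

/-!
View the `ns × ns` block matrices as `n × n` matrices over the ring `Mₛ(K)` (via
`Matrix.compRingEquiv`) and let `S` be the Krylov matrix of `M = F + D` whose rows are `e₀ Mⁱ`.
Since `D` is lower triangular, `M` carries the unit superdiagonal of `F`, so `S` is unit lower
triangular; and `S M = Φ S` for the companion matrix `Φ` of any relation
`e₀ Mⁿ = -∑ₖ Γₖ e₀ M^{n-k}`.

The relation comes from Horner sums:
`∑_{k ≤ ν} Aₖ e₀ M^{ν-k} = e_ν P + ∑_{m < ν} e_m P D M^{ν-1-m}`,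
because the rows of `P` obey the same recursion under `F` (with `e_n P = 0`). At `ν = n` only
the correction is left. As the first `p - 1` block rows of `D` vanish, `e_c = e₀ M^c` for
`c < p`, and the correction regroups along the subdiagonals of `P D` into
`∑ₖ SP(𝒥ᵏ P D) e₀ M^{n-1-k}`.
-/

open Finset

namespace CompanionSimilarity

lemma sum_range_eq_sum_range_add_of_vanish {M : Type*} [AddCommMonoid M] {f : ℕ → M} {c n : ℕ}
    (hlow : ∀ m < c, f m = 0) (hhigh : ∀ m, n ≤ m → f m = 0) :
    ∑ m ∈ range n, f m = ∑ k ∈ range n, f (c + k) := by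
  have htail : ∑ x ∈ range c, f (n + x) = 0 := sum_eq_zero fun x _ => hhigh _ (by omega)
  have hhead : ∑ x ∈ range c, f x = 0 := sum_eq_zero fun x hx => hlow x (by simpa using hx)
  rw [← add_zero (∑ m ∈ range n, f m), ← htail, ← sum_range_add, add_comm n, sum_range_add, hhead,
    zero_add]

variable {R : Type*} [Ring R] {n : ℕ}

-- Indexed by `ℕ`, so that `basisRow j = 0` for `j ≥ n`; this absorbs the boundary rows below.
def basisRow (j : ℕ) : Fin n → R := fun i => if (i : ℕ) = j then 1 else 0

lemma basisRow_eq_zero {j : ℕ} (h : n ≤ j) : (basisRow j : Fin n → R) = 0 := by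
  funext i
  simp only [basisRow, Pi.zero_apply, ite_eq_right_iff]
  omega

lemma basisRow_val (i : Fin n) : (basisRow i : Fin n → R) = Pi.single i 1 := by
  funext k
  simp [basisRow, Pi.single_apply, Fin.ext_iff]

lemma basisRow_vecMul {m : Type*} (i : Fin n) (X : Matrix (Fin n) m R) :
    basisRow i ᵥ* X = X i := by
  rw [basisRow_val, single_one_vecMul]; rfl

lemma basisRow_vecMul_apply {m : Type*} (j : ℕ) (X : Matrix (Fin n) m R) (c : m) :
    (basisRow j ᵥ* X) c = if h : j < n then X ⟨j, h⟩ c else 0 := by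
  split_ifs with h
  · rw [basisRow_vecMul ⟨j, h⟩]
  · rw [basisRow_eq_zero (not_lt.mp h), zero_vecMul, Pi.zero_apply]

lemma sum_smul_basisRow (v : Fin n → R) : ∑ c : Fin n, v c • basisRow c = v := by
  funext k
  simp [basisRow_val, Finset.sum_apply, Pi.single_apply]

def companion (n : ℕ) (a : ℕ → R) : Matrix (Fin n) (Fin n) R :=
  Matrix.of fun i j => if (i : ℕ) + 1 < n then (if (j : ℕ) = i + 1 then 1 else 0) else -a (n - j)

lemma basisRow_vecMul_companion (a : ℕ → R) (j : ℕ) :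
    basisRow j ᵥ* companion n a = basisRow (j + 1) -
      if j + 1 = n then ∑ k ∈ range n, a (k + 1) • basisRow (n - 1 - k) else 0 := by
  rcases lt_or_ge j n with hj | hj
  · rw [basisRow_vecMul ⟨j, hj⟩]
    split_ifs with hjn
    · have hrow : companion n a ⟨j, hj⟩ = fun c : Fin n => -a (n - c) := by
        funext c
        simp [companion, hjn]
      rw [basisRow_eq_zero hjn.ge, zero_sub, hrow,
        ← sum_smul_basisRow (fun c : Fin n => -a (n - c)), Fin.sum_univ_eq_sum_range (fun c => -a (n - c) • basisRow c), ← sum_range_reflect,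
        ← sum_neg_distrib]
      refine sum_congr rfl fun k hk => ?_
      rw [neg_smul, show n - (n - 1 - k) = k + 1 by grind]
    · funext c
      simp only [companion, of_apply, Pi.sub_apply, basisRow, Pi.zero_apply, sub_zero,
        ite_eq_left_iff, not_lt]
      omega
  · rw [basisRow_eq_zero hj, basisRow_eq_zero (by omega), zero_vecMul, if_neg (by omega), sub_zero]

def lowerToeplitz (n : ℕ) (a : ℕ → R) : Matrix (Fin n) (Fin n) R :=
  Matrix.of fun i j => if (j : ℕ) ≤ i then a (i - j) else 0

lemma lowerToeplitz_blockTriangular (a : ℕ → R) :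
    (lowerToeplitz n a).BlockTriangular OrderDual.toDual := by
  intro i j hij
  simp only [lowerToeplitz, of_apply, ite_eq_right_iff]
  exact fun h => absurd h (not_le.mpr hij)

lemma basisRow_vecMul_lowerToeplitz (a : ℕ → R) {ν : ℕ} (hν : ν < n) :
    basisRow ν ᵥ* lowerToeplitz n a = ∑ k ∈ range (ν + 1), a k • basisRow (ν - k) := by
  rw [basisRow_vecMul ⟨ν, hν⟩]
  funext c
  simp only [lowerToeplitz, of_apply, Finset.sum_apply, Pi.smul_apply, basisRow, smul_eq_mul,
    mul_ite, mul_one, mul_zero]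
  rw [sum_eq_single (ν - c)]
  · split_ifs <;> first | rfl | omega
  · intro k hk hkc
    exact if_neg (by rw [mem_range] at hk; omega)
  · simp

lemma basisRow_vecMul_lowerToeplitz_mul_companion {a : ℕ → R} (ha0 : a 0 = 1) {ν : ℕ}
    (hν : ν < n) :
    basisRow ν ᵥ* (lowerToeplitz n a * companion n a) + a (ν + 1) • basisRow 0 =
      basisRow (ν + 1) ᵥ* lowerToeplitz n a := by
  rw [← vecMul_vecMul, basisRow_vecMul_lowerToeplitz a hν, sum_vecMul]
  simp_rw [smul_vecMul, basisRow_vecMul_companion]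
  rcases (Nat.succ_le_of_lt hν).lt_or_eq with hlt | rfl
  · rw [basisRow_vecMul_lowerToeplitz a hlt, sum_range_succ _ (ν + 1), Nat.sub_self]
    congr 1
    refine sum_congr rfl fun k hk => ?_
    rw [mem_range] at hk
    rw [if_neg (by omega), sub_zero, show ν - k + 1 = ν + 1 - k by omega]
  · rw [basisRow_eq_zero le_rfl, zero_vecMul, sum_range_succ', sum_range_succ _ ν]
    have hsum : ∀ k ∈ range ν, ν - (k + 1) + 1 = ν - k := fun k hk => by
      rw [mem_range] at hk; omega
    simp +contextual only [hsum, Nat.sub_zero, Nat.succ_sub_one, Nat.sub_self, ha0, one_smul,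
      basisRow_eq_zero le_rfl, if_true]
    rw [sum_congr rfl fun k hk => by rw [if_neg (by rw [mem_range] at hk; omega), sub_zero]]
    abel

def horner (M : Matrix (Fin n) (Fin n) R) (w : ℕ → Fin n → R) (ν : ℕ) : Fin n → R :=
  ∑ m ∈ range ν, w m ᵥ* M ^ (ν - 1 - m)

lemma horner_zero (M : Matrix (Fin n) (Fin n) R) (w : ℕ → Fin n → R) : horner M w 0 = 0 := by
  simp [horner]

lemma horner_succ (M : Matrix (Fin n) (Fin n) R) (w : ℕ → Fin n → R) (ν : ℕ) :
    horner M w (ν + 1) = horner M w ν ᵥ* M + w ν := by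
  rw [horner, sum_range_succ, horner, sum_vecMul, Nat.add_sub_cancel, Nat.sub_self, pow_zero,
    vecMul_one]
  congr 1
  refine sum_congr rfl fun m hm => ?_
  rw [vecMul_vecMul, ← pow_succ, show ν - 1 - m + 1 = ν - m by rw [mem_range] at hm; omega]

lemma horner_smul_basisRow_zero_eq {a : ℕ → R} (ha0 : a 0 = 1) (D : Matrix (Fin n) (Fin n) R)
    {ν : ℕ} (hν : ν ≤ n) :
    horner (companion n a + D) (fun k => a k • basisRow 0) (ν + 1) =
      basisRow ν ᵥ* lowerToeplitz n a +
        horner (companion n a + D) (fun m => basisRow m ᵥ* (lowerToeplitz n a * D)) ν := by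
  induction ν with
  | zero =>
    rw [horner_succ, horner_zero, horner_zero, zero_vecMul, zero_add, add_zero]
    rcases Nat.eq_zero_or_pos n with rfl | hn
    · exact Subsingleton.elim _ _
    · simp [basisRow_vecMul_lowerToeplitz a hn]
  | succ ν ih =>
    rw [horner_succ, ih (by omega), horner_succ, add_vecMul, vecMul_add, vecMul_add, vecMul_vecMul,
      vecMul_vecMul, ← basisRow_vecMul_lowerToeplitz_mul_companion ha0 (by omega : ν < n)]
    abel

def shift (n : ℕ) : Matrix (Fin n) (Fin n) R :=
  Matrix.of fun i j => if (j : ℕ) = i + 1 then 1 else 0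

lemma basisRow_vecMul_shift_pow (j k : ℕ) :
    basisRow j ᵥ* (shift n : Matrix (Fin n) (Fin n) R) ^ k = basisRow (j + k) := by
  induction k with
  | zero => simp
  | succ k ih =>
    rw [pow_succ, ← vecMul_vecMul, ih, ← add_assoc]
    rcases lt_or_ge (j + k) n with hj | hj
    · rw [basisRow_vecMul ⟨j + k, hj⟩]
      funext c
      simp [shift, basisRow]
    · rw [basisRow_eq_zero hj, basisRow_eq_zero (by omega), zero_vecMul]

lemma trace_shift_pow_mul (X : Matrix (Fin n) (Fin n) R) (k : ℕ) :
    trace (shift n ^ k * X) = ∑ i : Fin n, (basisRow (i + k) ᵥ* X) i := by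
  refine sum_congr rfl fun i _ => ?_
  rw [diag_apply, ← basisRow_vecMul i (shift n ^ k * X), ← vecMul_vecMul,
    basisRow_vecMul_shift_pow]

-- The row `eₘ X` only involves the `e_c` with `c ≤ m` and `c < p`, and those are `u Mᶜ`;
-- collecting terms along the subdiagonals of `X` gives the traces.
lemma horner_basisRow_vecMul_eq_sum_trace {M X : Matrix (Fin n) (Fin n) R} {u : Fin n → R}
    {p : ℕ} (hX : X.BlockTriangular OrderDual.toDual) (hXp : ∀ i j : Fin n, p ≤ j → X i j = 0)
    (hu : ∀ c : Fin n, (c : ℕ) < p → basisRow c = u ᵥ* M ^ (c : ℕ)) :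
    horner M (fun m => basisRow m ᵥ* X) n =
      ∑ k ∈ range n, trace (shift n ^ k * X) • (u ᵥ* M ^ (n - 1 - k)) := by
  obtain ⟨g, hg⟩ : ∃ g : Fin n → ℕ → Fin n → R,
      ∀ c m, g c m = (basisRow m ᵥ* X) c • (u ᵥ* M ^ ((c : ℕ) + (n - 1 - m))) :=
    ⟨_, fun _ _ => rfl⟩
  have hterm : ∀ m, basisRow m ᵥ* X ᵥ* M ^ (n - 1 - m) = ∑ c, g c m := by
    intro m
    conv_lhs => rw [← sum_smul_basisRow (basisRow m ᵥ* X)]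
    rw [sum_vecMul]
    refine sum_congr rfl fun c _ => ?_
    rw [smul_vecMul, hg]
    by_cases hc : (c : ℕ) < p
    · rw [hu c hc, vecMul_vecMul, ← pow_add]
    · rw [basisRow_vecMul_apply]
      split_ifs <;> simp [hXp _ c (not_lt.mp hc)]
  have hvanish : ∀ (c : Fin n) (m : ℕ), (m < c ∨ n ≤ m) → g c m = 0 := by
    intro c m hm
    rw [hg, basisRow_vecMul_apply]
    split_ifs with h
    · rw [hX (show OrderDual.toDual c < OrderDual.toDual ⟨m, h⟩ by
        rcases hm with hm | hm <;> [exact hm; omega]), zero_smul]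
    · rw [zero_smul]
  have hreindex : ∀ c : Fin n, ∑ m ∈ range n, g c m =
      ∑ k ∈ range n, (basisRow (c + k) ᵥ* X) c • (u ᵥ* M ^ (n - 1 - k)) := by
    intro c
    rw [sum_range_eq_sum_range_add_of_vanish (c := c) (fun m hm => hvanish c m (Or.inl hm))
      (fun m hm => hvanish c m (Or.inr hm))]
    refine sum_congr rfl fun k hk => ?_
    by_cases hck : (c : ℕ) + k < n
    · rw [hg, show (c : ℕ) + (n - 1 - (c + k)) = n - 1 - k by omega]
    · rw [hvanish c (c + k) (Or.inr (by omega)), basisRow_eq_zero (by omega), zero_vecMul,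
        Pi.zero_apply, zero_smul]
  rw [horner, sum_congr rfl fun m _ => hterm m, sum_comm, sum_congr rfl fun c _ => hreindex c]
  simp_rw [trace_shift_pow_mul, sum_smul]
  exact sum_comm

lemma basisRow_eq_vecMul_pow {a : ℕ → R} {D : Matrix (Fin n) (Fin n) R} {p : ℕ}
    (hD : ∀ i j : Fin n, (i : ℕ) + 1 < p → D i j = 0) :
    ∀ c : ℕ, c < n → c < p → basisRow c = basisRow 0 ᵥ* (companion n a + D) ^ c
  | 0, _, _ => by simp
  | c + 1, hcn, hcp => by
    have hrow : D ⟨c, by omega⟩ = 0 := funext (hD _ · (by simpa using hcp))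
    rw [pow_succ, ← vecMul_vecMul, ← basisRow_eq_vecMul_pow hD c (by omega) (by omega),
      vecMul_add, basisRow_vecMul ⟨c, by omega⟩ D, hrow, add_zero, basisRow_vecMul_companion,
      if_neg (by omega), sub_zero]

-- The paper's `Γₖ` for `k ≥ 1`; the junk value at `k = 0` never enters `companion`.
def perturbedCoeff (a : ℕ → R) (D : Matrix (Fin n) (Fin n) R) (k : ℕ) : R :=
  a k - trace (shift n ^ (k - 1) * (lowerToeplitz n a * D))

lemma blockTriangular_of_rows_cols {D : Matrix (Fin n) (Fin n) R} {p : ℕ}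
    (hrows : ∀ i j : Fin n, (i : ℕ) + 1 < p → D i j = 0)
    (hcols : ∀ i j : Fin n, p ≤ (j : ℕ) → D i j = 0) : D.BlockTriangular OrderDual.toDual := by
  intro i j hij
  change i < j at hij
  by_cases hj : p ≤ (j : ℕ)
  · exact hcols i j hj
  · exact hrows i j (by omega)

lemma basisRow_zero_vecMul_pow_eq {a : ℕ → R} {D : Matrix (Fin n) (Fin n) R} {p : ℕ}
    (hrows : ∀ i j : Fin n, (i : ℕ) + 1 < p → D i j = 0)
    (hcols : ∀ i j : Fin n, p ≤ (j : ℕ) → D i j = 0) (ha0 : a 0 = 1) :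
    basisRow 0 ᵥ* (companion n a + D) ^ n = -∑ k ∈ range n,
      perturbedCoeff a D (k + 1) • (basisRow 0 ᵥ* (companion n a + D) ^ (n - 1 - k)) := by
  have hX := (lowerToeplitz_blockTriangular (n := n) a).mul
    (blockTriangular_of_rows_cols hrows hcols)
  have hXp : ∀ i j : Fin n, p ≤ (j : ℕ) → (lowerToeplitz n a * D) i j = 0 := fun i j hj => by
    rw [mul_apply]
    exact sum_eq_zero fun r _ => by rw [hcols r j hj, mul_zero]
  have key := horner_smul_basisRow_zero_eq ha0 D le_rfl
  rw [basisRow_eq_zero le_rfl, zero_vecMul, zero_add,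
    horner_basisRow_vecMul_eq_sum_trace hX hXp fun c hc => basisRow_eq_vecMul_pow hrows c c.isLt hc,
    horner, sum_range_succ'] at key
  simp only [perturbedCoeff, add_tsub_cancel_right, ha0, one_smul, Nat.sub_zero, smul_vecMul,
    sub_smul, sum_sub_distrib] at key ⊢
  rw [sum_congr rfl fun k _ => by rw [Nat.sub_add_eq, Nat.sub_right_comm]] at key
  rw [← key]
  abel

def krylov (M : Matrix (Fin n) (Fin n) R) (u : Fin n → R) : Matrix (Fin n) (Fin n) R :=
  Matrix.of fun i => u ᵥ* M ^ (i : ℕ)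

lemma basisRow_vecMul_krylov (M : Matrix (Fin n) (Fin n) R) (u : Fin n → R) {j : ℕ}
    (hj : j < n) : basisRow j ᵥ* krylov M u = u ᵥ* M ^ j :=
  basisRow_vecMul ⟨j, hj⟩ _

lemma krylov_mul_eq_companion_mul {M : Matrix (Fin n) (Fin n) R} {u : Fin n → R} {c : ℕ → R}
    (h : u ᵥ* M ^ n = -∑ k ∈ range n, c (k + 1) • (u ᵥ* M ^ (n - 1 - k))) :
    krylov M u * M = companion n c * krylov M u := by
  funext i
  rw [← basisRow_vecMul i (krylov M u * M), ← basisRow_vecMul i (companion n c * krylov M u),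
    ← vecMul_vecMul, ← vecMul_vecMul, basisRow_vecMul_krylov M u i.isLt, vecMul_vecMul, ← pow_succ,
    basisRow_vecMul_companion, sub_vecMul]
  split_ifs with hi
  · rw [basisRow_eq_zero hi.ge, zero_vecMul, zero_sub, hi, h, sum_vecMul]
    congr 1
    refine sum_congr rfl fun k hk => ?_
    rw [smul_vecMul, basisRow_vecMul_krylov M u (by rw [mem_range] at hk; omega)]
  · rw [zero_vecMul, sub_zero, basisRow_vecMul_krylov M u (by omega)]

lemma companion_add_apply_of_lt (a : ℕ → R) {D : Matrix (Fin n) (Fin n) R}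
    (hD : D.BlockTriangular OrderDual.toDual) {i j : Fin n} (hij : i < j) :
    (companion n a + D) i j = if (j : ℕ) = i + 1 then 1 else 0 := by
  have : (i : ℕ) + 1 < n := by have := j.isLt; rw [Fin.lt_def] at hij; omega
  rw [Matrix.add_apply, hD hij, add_zero, companion, of_apply, if_pos this]

lemma basisRow_zero_vecMul_pow_apply {M : Matrix (Fin n) (Fin n) R}
    (hM : ∀ i j : Fin n, i < j → M i j = if (j : ℕ) = i + 1 then 1 else 0) :
    ∀ (i : ℕ) (j : Fin n), i ≤ j → (basisRow 0 ᵥ* M ^ i) j = if (j : ℕ) = i then 1 else 0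
  | 0, j, _ => by simp [basisRow]
  | i + 1, j, hij => by
    have hi : i < n := by omega
    have IH := basisRow_zero_vecMul_pow_apply hM i
    rw [pow_succ, ← vecMul_vecMul, vecMul, dotProduct, sum_eq_single ⟨i, hi⟩]
    · rw [IH _ le_rfl, if_pos rfl, one_mul, hM _ _ (Fin.lt_def.mpr (by dsimp; omega))]
    · intro m _ hm
      rcases lt_or_gt_of_ne hm with hm | hm
      · rw [Fin.lt_def] at hm
        rw [hM m j (Fin.lt_def.mpr (by dsimp at hm; omega)), if_neg (by dsimp at hm; omega),
          mul_zero]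
      · rw [IH m hm.le, if_neg (by rw [Fin.lt_def] at hm; dsimp at hm; omega), zero_mul]
    · simp

lemma krylov_apply_of_le {M : Matrix (Fin n) (Fin n) R}
    (hM : ∀ i j : Fin n, i < j → M i j = if (j : ℕ) = i + 1 then 1 else 0) {i j : Fin n}
    (hij : i ≤ j) : krylov M (basisRow 0) i j = if i = j then 1 else 0 := by
  rw [krylov, of_apply, basisRow_zero_vecMul_pow_apply hM i j hij]
  simp [Fin.ext_iff, eq_comm]

section Blocks

variable {K : Type*} [Field K] {s : ℕ}

lemma compRingEquiv_companion (A : ℕ → Matrix (Fin s) (Fin s) K) :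
    compRingEquiv (Fin n) (Fin s) K (companion n A) = frob n s A := by
  ext ⟨i, a⟩ ⟨j, b⟩
  simp only [compRingEquiv_apply, comp_apply, companion, of_apply, frob]
  split_ifs <;> rfl

lemma compRingEquiv_lowerToeplitz (A : ℕ → Matrix (Fin s) (Fin s) K) :
    compRingEquiv (Fin n) (Fin s) K (lowerToeplitz n A) = toep n s A := by
  ext ⟨i, a⟩ ⟨j, b⟩
  simp only [compRingEquiv_apply, comp_apply, lowerToeplitz, of_apply, toep]
  split_ifs <;> rfl

lemma compRingEquiv_shift :
    compRingEquiv (Fin n) (Fin s) K (shift n) = shiftJ K n ⊗ₖ (1 : Matrix (Fin s) (Fin s) K) := by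
  ext ⟨i, a⟩ ⟨j, b⟩
  simp only [compRingEquiv_apply, comp_apply, shift, of_apply, kroneckerMap_apply, shiftJ]
  split_ifs <;> simp

lemma blk_compRingEquiv (X : Matrix (Fin n) (Fin n) (Matrix (Fin s) (Fin s) K)) (i j : Fin n) :
    blk (compRingEquiv (Fin n) (Fin s) K X) i j = X i j := rfl

lemma SP_eq_trace (X : Matrix (Fin n × Fin s) (Fin n × Fin s) K) :
    SP X = trace ((compRingEquiv (Fin n) (Fin s) K).symm X) := rfl

lemma SP_shiftJ_pow_mul (X : Matrix (Fin n × Fin s) (Fin n × Fin s) K) (k : ℕ) :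
    SP ((shiftJ K n ⊗ₖ (1 : Matrix (Fin s) (Fin s) K)) ^ k * X) =
      trace (shift n ^ k * (compRingEquiv (Fin n) (Fin s) K).symm X) := by
  rw [← compRingEquiv_shift, ← map_pow, SP_eq_trace, map_mul, RingEquiv.symm_apply_apply]

lemma det_compRingEquiv_eq_one {S : Matrix (Fin n) (Fin n) (Matrix (Fin s) (Fin s) K)}
    (hS : ∀ i j : Fin n, i ≤ j → S i j = if i = j then 1 else 0) :
    (compRingEquiv (Fin n) (Fin s) K S).det = 1 := by
  have hBT : (compRingEquiv (Fin n) (Fin s) K S).BlockTriangular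
      (fun q => OrderDual.toDual q.1) := by
    intro q q' hq
    change q.1 < q'.1 at hq
    simp [hS _ _ hq.le, hq.ne]
  rw [hBT.det]
  refine prod_eq_one fun k _ => ?_
  have hblock : (compRingEquiv (Fin n) (Fin s) K S).toSquareBlock (fun q => OrderDual.toDual q.1) k
      = 1 := by
    ext ⟨⟨i, a⟩, hi⟩ ⟨⟨j, b⟩, hj⟩
    obtain rfl : i = j := hi.trans hj.symm
    simp [toSquareBlock_def, hS, one_apply]
  rw [hblock, det_one]

end Blocks

end CompanionSimilarity

open CompanionSimilarity

theorem stmt11_general {K : Type*} [Field K] {s n p : ℕ}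
    (A : ℕ → Matrix (Fin s) (Fin s) K) (hA0 : A 0 = 1)
    (D : Matrix (Fin n × Fin s) (Fin n × Fin s) K)
    (hDrows : ∀ i j : Fin n, (i : ℕ) + 1 < p → blk D i j = 0)
    (hDcols : ∀ i j : Fin n, p ≤ (j : ℕ) → blk D i j = 0) :
    ∃ S : Matrix (Fin n × Fin s) (Fin n × Fin s) K,
      IsUnit S.det ∧
      (∀ i j : Fin n, (i : ℕ) < (j : ℕ) → blk S i j = 0) ∧
      (∀ i j : Fin n, (i : ℕ) + 1 < n →
        blk (S * (frob n s A + D) * S⁻¹) i j =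
          if (j : ℕ) = (i : ℕ) + 1 then (1 : Matrix (Fin s) (Fin s) K) else 0) ∧
      (∀ (h : n - 1 < n) (j : Fin n),
        blk (S * (frob n s A + D) * S⁻¹) ⟨n - 1, h⟩ j =
          -(A (n - (j : ℕ)) -
            SP ((shiftJ K n ⊗ₖ (1 : Matrix (Fin s) (Fin s) K)) ^ (n - 1 - (j : ℕ)) *
              (toep n s A * D)))) := by
  set e := compRingEquiv (Fin n) (Fin s) K
  set D' := e.symm D
  set M := companion n A + D'
  set S := krylov M (basisRow 0)
  have hSM : S * M = companion n (perturbedCoeff A D') * S :=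
    krylov_mul_eq_companion_mul (basisRow_zero_vecMul_pow_eq hDrows hDcols hA0)
  have hS : ∀ i j : Fin n, i ≤ j → S i j = if i = j then 1 else 0 := fun _ _ =>
    krylov_apply_of_le fun _ _ => companion_add_apply_of_lt A
      (blockTriangular_of_rows_cols hDrows hDcols)
  have hdet : IsUnit (e S).det := by rw [det_compRingEquiv_eq_one hS]; exact isUnit_one
  have hconj : e S * (frob n s A + D) * (e S)⁻¹ = e (companion n (perturbedCoeff A D')) := by
    rw [← compRingEquiv_companion, ← e.apply_symm_apply D, ← map_add, ← map_mul, hSM, map_mul,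
      mul_assoc, mul_nonsing_inv _ hdet, mul_one]
  refine ⟨e S, hdet, fun i j hij => ?_, fun i j hi => ?_, fun h j => ?_⟩
  · rw [blk_compRingEquiv, hS i j hij.le, if_neg (Fin.ne_of_lt hij)]
  · rw [hconj, blk_compRingEquiv, companion, of_apply, if_pos hi]
  · rw [hconj, SP_shiftJ_pow_mul, ← compRingEquiv_lowerToeplitz, map_mul, e.symm_apply_apply,
      blk_compRingEquiv, companion, of_apply, if_neg (by dsimp only; omega), perturbedCoeff,
      Nat.sub_right_comm]

/-- If `F` is the lower block Frobenius matrix with last block row `[-Aₙ,…,-A₁]`,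
`P` the lower block triangular Toeplitz matrix of the `Aᵢ` (`A₀ = I`), and `D` a block
matrix whose first `p-1` block rows and last `n-p` block columns are zero, then some
invertible lower block triangular `S` satisfies `S (F + D) S⁻¹ = Φ`, the block
Frobenius matrix with coefficients `Γᵢ = Aᵢ - SP_s(𝒥^{i-1} P D)`. -/
theorem stmt11 {K : Type*} [Field K] {s n p : ℕ} (hp1 : 1 ≤ p) (hpn : p ≤ n)
    (A : ℕ → Matrix (Fin s) (Fin s) K) (hA0 : A 0 = 1)
    (D : Matrix (Fin n × Fin s) (Fin n × Fin s) K)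
    (hDrows : ∀ i j : Fin n, (i : ℕ) + 1 < p → blk D i j = 0)
    (hDcols : ∀ i j : Fin n, p ≤ (j : ℕ) → blk D i j = 0) :
    ∃ S : Matrix (Fin n × Fin s) (Fin n × Fin s) K,
      IsUnit S.det ∧
      (∀ i j : Fin n, (i : ℕ) < (j : ℕ) → blk S i j = 0) ∧
      (∀ i j : Fin n, (i : ℕ) + 1 < n →
        blk (S * (frob n s A + D) * S⁻¹) i j =
          if (j : ℕ) = (i : ℕ) + 1 then (1 : Matrix (Fin s) (Fin s) K) else 0) ∧
      (∀ (h : n - 1 < n) (j : Fin n),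
        blk (S * (frob n s A + D) * S⁻¹) ⟨n - 1, h⟩ j =
          -(A (n - (j : ℕ)) -
            SP ((shiftJ K n ⊗ₖ (1 : Matrix (Fin s) (Fin s) K)) ^ (n - 1 - (j : ℕ)) *
              (toep n s A * D)))) :=
  stmt11_general A hA0 D hDrows hDcols
end

section
/- Let Γ_i = A_i − SP_s(N_{i−1} D) for i = 1,…,n, where N_ν is defined by N_0 = I, N_ν = N_{ν−1}F + (I_n ⊗ A_ν), and let T_i = SP_s(F^{i−1} D). Then the column stack ĉol(Γ_1,…,Γ_n) equals ĉol(A_1,…,A_n) − P·ĉol(T_1,…,T_n), where P is the lower block triangular Toeplitz matrix with blocks A_{i−j} (A_0 = I). In particular, since P is invertible, ĉol(T_1,…,T_n) = P⁻¹(ĉol(A_1,…,A_n) − ĉol(Γ_1,…,Γ_n)). -/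
/-!
Unrolling the recursion gives `N_ν = ∑_{j ≤ ν} (Iₙ ⊗ A_{ν-j}) F^j`, so by
`SP_s((Iₙ ⊗ B) C) = B SP_s(C)` we get `SP_s(N_{i-1} D) = ∑_{j ≤ i-1} A_{i-1-j} T_{j+1}`, which is
the `i`-th block row of `P · ĉol T`. The matrix `P` is block lower triangular with diagonal
blocks `A_0 = I`, hence invertible.
-/

open Matrix Kronecker

/-- Stack `n` matrices of size `s×s` vertically into an `ns×s` matrix. -/
def colStack {K : Type*} [Field K] {n s : ℕ}
    (f : Fin n → Matrix (Fin s) (Fin s) K) : Matrix (Fin n × Fin s) (Fin s) K :=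
  fun p b => f p.1 p.2 b


section BlockTrace

variable {K : Type*} [Field K] {n s : ℕ}

lemma SP_sum {ι : Type*} (t : Finset ι) (M : ι → Matrix (Fin n × Fin s) (Fin n × Fin s) K) :
    SP (∑ j ∈ t, M j) = ∑ j ∈ t, SP (M j) := by
  ext a b
  simp only [SP, blk, Matrix.sum_apply]
  exact Finset.sum_comm

lemma SP_one_kronecker_mul (B : Matrix (Fin s) (Fin s) K)
    (C : Matrix (Fin n × Fin s) (Fin n × Fin s) K) :
    SP (((1 : Matrix (Fin n) (Fin n) K) ⊗ₖ B) * C) = B * SP C := by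
  ext a b
  simp only [SP, blk, Matrix.sum_apply, Matrix.mul_apply, Fintype.sum_prod_type,
    kroneckerMap_apply, Matrix.one_apply, ite_mul, one_mul, zero_mul, Finset.mul_sum,
    Finset.sum_ite_irrel, Finset.sum_const_zero, Finset.sum_ite_eq, Finset.mem_univ, if_true]
  exact Finset.sum_comm

end BlockTrace

section Nmat

variable {K : Type*} [Field K] {n s : ℕ} (F : Matrix (Fin n × Fin s) (Fin n × Fin s) K)
  {A : ℕ → Matrix (Fin s) (Fin s) K}

lemma Nmat_eq_sum (hA0 : A 0 = 1) (ν : ℕ) :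
    Nmat F A ν = ∑ j ∈ Finset.range (ν + 1),
      ((1 : Matrix (Fin n) (Fin n) K) ⊗ₖ A (ν - j)) * F ^ j := by
  induction ν with
  | zero => simp [Nmat, hA0]
  | succ ν ih =>
    rw [Nmat, ih, Finset.sum_mul, Finset.sum_range_succ'
      (fun j => ((1 : Matrix (Fin n) (Fin n) K) ⊗ₖ A (ν + 1 - j)) * F ^ j)]
    simp only [Nat.succ_sub_succ_eq_sub, Nat.sub_zero, pow_zero, mul_one, pow_succ, mul_assoc]

lemma SP_Nmat_mul (hA0 : A 0 = 1) (D : Matrix (Fin n × Fin s) (Fin n × Fin s) K) (ν : ℕ) :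
    SP (Nmat F A ν * D) = ∑ j ∈ Finset.range (ν + 1), A (ν - j) * SP (F ^ j * D) := by
  simp_rw [Nmat_eq_sum F hA0, Finset.sum_mul, SP_sum, mul_assoc, SP_one_kronecker_mul]

end Nmat

section Toeplitz

variable {K : Type*} [Field K] {n s : ℕ} (A : ℕ → Matrix (Fin s) (Fin s) K)

lemma toep_mul_colStack (f : ℕ → Matrix (Fin s) (Fin s) K) :
    toep n s A * colStack (fun j : Fin n => f j)
      = colStack (fun i : Fin n => ∑ j ∈ Finset.range (i + 1), A (i - j) * f j) := by
  ext ⟨i, a⟩ b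
  have hrange : Finset.range (i + 1) = (Finset.range n).filter (· ≤ (i : ℕ)) := by
    ext j
    simp only [Finset.mem_range, Finset.mem_filter]
    omega
  simp only [colStack, Matrix.mul_apply, Fintype.sum_prod_type, toep, ite_mul, zero_mul,
    Finset.sum_ite_irrel, Finset.sum_const_zero, hrange, Finset.sum_filter, Matrix.sum_apply]
  exact Fin.sum_univ_eq_sum_range (fun j => if j ≤ (i : ℕ) then (A (i - j) * f j) a b else 0) n

lemma isUnit_det_toep (h : IsUnit (A 0).det) : IsUnit (toep n s A).det := by
  have hlower : (toep n s A)ᵀ.BlockTriangular Prod.fst := by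
    intro p c hcp
    simp [toep, not_le.mpr (Fin.lt_def.mp hcp)]
  have hdiag (i : Fin n) : ((toep n s A)ᵀ.toSquareBlock Prod.fst i).det = (A 0).det := by
    let e : Fin s ≃ {p : Fin n × Fin s // p.1 = i} :=
      { toFun := fun b => ⟨(i, b), rfl⟩
        invFun := fun p => p.1.2
        left_inv := fun _ => rfl
        right_inv := by rintro ⟨⟨j, b⟩, rfl⟩; rfl }
    have hblock : (toep n s A)ᵀ.toSquareBlock Prod.fst i = reindex e e (A 0)ᵀ := by
      ext ⟨⟨j, a⟩, hj⟩ ⟨⟨k, b⟩, hk⟩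
      subst hj; cases hk
      simp [toSquareBlock_def, toep, e]
    rw [hblock, det_reindex_self, det_transpose]
  rw [← det_transpose, hlower.det, IsUnit.prod_iff]
  exact fun i _ => hdiag i ▸ h

end Toeplitz

/-- With `Γᵢ = Aᵢ - SP_s(N_{i-1} D)` and `Tᵢ = SP_s(F^{i-1} D)`, one has
`ĉol Γ = ĉol A - P · ĉol T`; in particular, since `P` is invertible,
`ĉol T = P⁻¹ (ĉol A - ĉol Γ)`. -/
theorem stmt15 {K : Type*} [Field K] {s n : ℕ}
    (A : ℕ → Matrix (Fin s) (Fin s) K) (hA0 : A 0 = 1)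
    (D : Matrix (Fin n × Fin s) (Fin n × Fin s) K)
    (Γ T : Fin n → Matrix (Fin s) (Fin s) K)
    (hΓ : ∀ i : Fin n, Γ i = A ((i : ℕ) + 1) - SP (Nmat (frob n s A) A (i : ℕ) * D))
    (hT : ∀ i : Fin n, T i = SP ((frob n s A) ^ (i : ℕ) * D)) :
    IsUnit (toep n s A).det ∧
    colStack Γ = colStack (fun i => A ((i : ℕ) + 1)) - toep n s A * colStack T ∧
    colStack T = (toep n s A)⁻¹ * (colStack (fun i => A ((i : ℕ) + 1)) - colStack Γ) := by
  have hP : IsUnit (toep n s A).det := isUnit_det_toep A (by simp [hA0])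
  have hPT : toep n s A * colStack T = colStack (fun i => SP (Nmat (frob n s A) A i * D)) := by
    rw [show T = fun i : Fin n => SP (frob n s A ^ (i : ℕ) * D) from funext hT,
      toep_mul_colStack A (fun j => SP (frob n s A ^ j * D))]
    simp_rw [SP_Nmat_mul _ hA0]
  have hΓP : colStack Γ = colStack (fun i => A ((i : ℕ) + 1)) - toep n s A * colStack T := by
    rw [hPT]
    exact congrArg colStack (funext hΓ)
  refine ⟨hP, hΓP, ?_⟩
  rw [hΓP, sub_sub_cancel, ← Matrix.mul_assoc, nonsing_inv_mul _ hP, Matrix.one_mul]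
end
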